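/- Let i ≤ ℓ−1 be a non-critical index. For all V-selectors f and g: if f_{i+1}(v) = g_{i+1}(v) for every node v ∈ Θ_{i+1}, then f_i(v) = g_i(v) for every node v ∈ Θ_i. (This is the determination content of the claim that the selector view f_i is definable from f_{i+1} alone when i is non-critical.) -/

import Mathlib

universe u v

/-- A leaf of a graph: a node with at most one neighbour. -/
def IsTreeLeaf {𝒱 : Type v} (T : SimpleGraph 𝒱) (x : 𝒱) : Prop :=
  (T.neighborSet x).Subsingleton

/-- `(T, B)` is a tree decomposition of the graph with vertex set `V` and edge
relation `E`. -/
def IsTreeDecomp {V : Type u} {𝒱 : Type v} (E : V → V → Prop) (T : SimpleGraph 𝒱)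
    (B : 𝒱 → Finset V) : Prop :=
  T.IsTree ∧ (∀ s t : V, E s t → ∃ x : 𝒱, s ∈ B x ∧ t ∈ B x) ∧
    ∀ s : V, (T.induce {x : 𝒱 | s ∈ B x}).Connected

/-- A nice (rooted) tree decomposition: every leaf has a singleton bag, every vertex
is the bag of some leaf, and along every tree edge one bag is obtained from the other
by adding exactly one vertex. -/
def IsNiceTD {V : Type u} {𝒱 : Type v} [DecidableEq V] (E : V → V → Prop)
    (T : SimpleGraph 𝒱) (B : 𝒱 → Finset V) (root : 𝒱) : Prop :=
  IsTreeDecomp E T B ∧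
  (∀ x : 𝒱, IsTreeLeaf T x → ∃ s : V, B x = {s}) ∧
  (∀ s : V, ∃ x : 𝒱, IsTreeLeaf T x ∧ B x = {s}) ∧
  ∀ x y : 𝒱, T.Adj x y →
    (∃ s : V, s ∉ B x ∧ B y = insert s (B x)) ∨ (∃ s : V, s ∉ B y ∧ B x = insert s (B y))

/-- A depth-first traversal `vs 1, …, vs ℓ` of the rooted tree `T`: it starts and ends
at the root, consecutive nodes are adjacent, and every oriented edge of `T` occurs
exactly once among consecutive pairs. -/
structure IsDFT {𝒱 : Type v} (T : SimpleGraph 𝒱) (root : 𝒱) (ℓ : ℕ) (vs : ℕ → 𝒱) :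
    Prop where
  one_le : 1 ≤ ℓ
  first : vs 1 = root
  last : vs ℓ = root
  adj : ∀ j : ℕ, 1 ≤ j → j < ℓ → T.Adj (vs j) (vs (j + 1))
  once : ∀ a b : 𝒱, T.Adj a b → ∃! j : ℕ, 1 ≤ j ∧ j < ℓ ∧ vs j = a ∧ vs (j + 1) = b

/-- `x` is an ancestor of `y` (w.r.t. `root`): `x` lies on the path from the root
to `y`.  (In a tree the path between two nodes is unique.) -/
def Anc {𝒱 : Type v} (T : SimpleGraph 𝒱) (root x y : 𝒱) : Prop :=
  ∀ p : T.Walk root y, p.IsPath → x ∈ p.support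

/-- `Θ_i`: the set of ancestors of `vs i`. -/
def Theta {𝒱 : Type v} (T : SimpleGraph 𝒱) (root : 𝒱) (vs : ℕ → 𝒱) (i : ℕ) : Set 𝒱 :=
  {x | Anc T root x (vs i)}

/-- `Θ_{≤ i} = ⋃_{1 ≤ j ≤ i} Θ_j`. -/
def ThetaLe {𝒱 : Type v} (T : SimpleGraph 𝒱) (root : 𝒱) (vs : ℕ → 𝒱) (i : ℕ) : Set 𝒱 :=
  {x | ∃ j : ℕ, 1 ≤ j ∧ j ≤ i ∧ x ∈ Theta T root vs j}

/-- `Ψ_i = ⋃_{x ∈ Θ_i} B x`. -/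
def Psi {V : Type u} {𝒱 : Type v} (T : SimpleGraph 𝒱) (root : 𝒱) (vs : ℕ → 𝒱)
    (B : 𝒱 → Finset V) (i : ℕ) : Set V :=
  {s | ∃ x ∈ Theta T root vs i, s ∈ B x}

/-- `Ψ_{≤ i} = ⋃_{1 ≤ j ≤ i} Ψ_j`. -/
def PsiLe {V : Type u} {𝒱 : Type v} (T : SimpleGraph 𝒱) (root : 𝒱) (vs : ℕ → 𝒱)
    (B : 𝒱 → Finset V) (i : ℕ) : Set V :=
  {s | ∃ j : ℕ, 1 ≤ j ∧ j ≤ i ∧ s ∈ Psi T root vs B j}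

/-- `x = n_i(w)`: `x` is the lowest ancestor of `w` belonging to `Θ_{≤ i}`. -/
def LowestAnc {𝒱 : Type v} (T : SimpleGraph 𝒱) (root : 𝒱) (vs : ℕ → 𝒱) (i : ℕ)
    (w x : 𝒱) : Prop :=
  Anc T root x w ∧ x ∈ ThetaLe T root vs i ∧
    ∀ y : 𝒱, Anc T root y w → y ∈ ThetaLe T root vs i → Anc T root y x

/-- `r = r(s)`: the node of `𝒯^s = {x | s ∈ B x}` closest to the root. -/
def IsBagRoot {V : Type u} {𝒱 : Type v} (T : SimpleGraph 𝒱) (root : 𝒱)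
    (B : 𝒱 → Finset V) (s : V) (r : 𝒱) : Prop :=
  s ∈ B r ∧ ∀ x : 𝒱, s ∈ B x → Anc T root r x

/-- `Ψ_{> i-1}(x) = {s ∈ Ψ_{> i-1} | n_i(s) = x}`, where `n_i(s) = n_i(r(s))`. -/
def PsiGtAt {V : Type u} {𝒱 : Type v} (T : SimpleGraph 𝒱) (root : 𝒱) (vs : ℕ → 𝒱)
    (B : 𝒱 → Finset V) (i : ℕ) (x : 𝒱) : Set V :=
  {s | s ∉ PsiLe T root vs B (i - 1) ∧
    ∃ r : 𝒱, IsBagRoot T root B s r ∧ LowestAnc T root vs i r x}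

/-- Possible values of a selector view: `?`, `⊤`, `⊥`, or an exit pair `(t, m)`. -/
inductive View (V : Type u) : Type u where
  | unk : View V
  | top : View V
  | bot : View V
  | exit : V → ℕ → View V

/-- The trace of the (partial) selector `f` from `s`: `iter f s n` is the `n`-th
vertex of the trace, if the trace is still defined at step `n`. -/
def iter {V : Type u} (f : V → Option V) (s : V) : ℕ → Option V
  | 0 => some s
  | n + 1 => (iter f s n).bind f

/-- `t` occurs infinitely often on the trace of `f` from `s`. -/
def infOcc {V : Type u} (f : V → Option V) (s t : V) : Prop :=
  ∀ N : ℕ, ∃ n : ℕ, N ≤ n ∧ iter f s n = some t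

/-- A parity game together with a tree decomposition and a depth-first traversal:
edge relation `E`, number of colors `C`, coloring `c`, set `V0` of vertices of
player `P₀` (`V1 = V0ᶜ`), tree `T` with bags `B`, depth-first traversal
`vs 1, …, vs len` and distinguished initial vertex `sigma`. -/
structure Setting (V : Type u) (𝒱 : Type v) where
  E : V → V → Prop
  C : ℕ
  c : V → ℕ
  V0 : Set V
  T : SimpleGraph 𝒱
  vs : ℕ → 𝒱
  len : ℕ
  sigma : V
  B : 𝒱 → Finset V

namespace Setting

variable {V : Type u} {𝒱 : Type v} (S : Setting V 𝒱)

/-- The root of the tree is the first node of the depth-first traversal. -/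
def root : 𝒱 := S.vs 1

/-- Standing assumptions: colors lie in `{1, …, C}`, `(T, B)` is a nice tree
decomposition of `(V, E)` rooted at `v₁` with bag `{σ}`, and `vs` is a
depth-first traversal of `T` of length `len`. -/
def Standing [DecidableEq V] : Prop :=
  (∀ s : V, 1 ≤ S.c s ∧ S.c s ≤ S.C) ∧
  IsNiceTD S.E S.T S.B S.root ∧
  IsDFT S.T S.root S.len S.vs ∧
  S.B S.root = {S.sigma}

def theta (i : ℕ) : Set 𝒱 := Theta S.T S.root S.vs i

def psi (i : ℕ) : Set V := Psi S.T S.root S.vs S.B i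

def psiLe (i : ℕ) : Set V := PsiLe S.T S.root S.vs S.B i

def psiGtAt (i : ℕ) (x : 𝒱) : Set V := PsiGtAt S.T S.root S.vs S.B i x

/-- The index `i` is critical: `Ψ_{>i} ⊊ Ψ_{>i-1}`. -/
def Crit (i : ℕ) : Prop := (S.psiLe i)ᶜ ⊂ (S.psiLe (i - 1))ᶜ

/-- `f` is a `W`-selector: a partial map with domain contained in `W` that follows
edges of the game. -/
def Sel (W : Set V) (f : V → Option V) : Prop :=
  ∀ s t : V, f s = some t → s ∈ W ∧ S.E s t

/-- The (maximal) trace of the `V`-selector `f` from `s` is winning for player `P₀`: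
either it is finite and its last vertex belongs to `V1 = V0ᶜ`, or it is infinite and
the maximal color occurring infinitely often along it is even. -/
def TraceWin (f : V → Option V) (s : V) : Prop :=
  (∃ (n : ℕ) (t : V), iter f s n = some t ∧ f t = none ∧ t ∉ S.V0) ∨
  ((∀ n : ℕ, iter f s n ≠ none) ∧
    ∃ m : ℕ, Even m ∧ (∃ t : V, infOcc f s t ∧ S.c t = m) ∧
      ∀ t : V, infOcc f s t → S.c t ≤ m)

/-- The selector view `f_i(x, s)` of the `V`-selector `f`: `S.SelView f i x s w`
means `f_i(x, s) = w`. -/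
def SelView (f : V → Option V) (i : ℕ) (x : 𝒱) (s : V) : View V → Prop := fun w =>
  match w with
  | View.unk =>
      (f s = none ∧ s ∉ S.psiGtAt i x) ∨ (∃ t : V, f s = some t ∧ t ∉ S.psiGtAt i x)
  | View.top =>
      (f s ≠ none ∨ s ∈ S.psiGtAt i x) ∧
      (∀ (n : ℕ) (t : V), 1 ≤ n → iter f s n = some t → t ∈ S.psiGtAt i x) ∧
      S.TraceWin f s
  | View.bot =>
      (f s ≠ none ∨ s ∈ S.psiGtAt i x) ∧
      (∀ (n : ℕ) (t : V), 1 ≤ n → iter f s n = some t → t ∈ S.psiGtAt i x) ∧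
      ¬ S.TraceWin f s
  | View.exit t m =>
      ∃ j : ℕ, 2 ≤ j ∧ iter f s j = some t ∧ t ∉ S.psiGtAt i x ∧
        (∀ (n : ℕ) (u : V), 1 ≤ n → n < j → iter f s n = some u → u ∈ S.psiGtAt i x) ∧
        (∃ (n : ℕ) (u : V), n < j ∧ iter f s n = some u ∧ S.c u = m) ∧
        (∀ (n : ℕ) (u : V), n < j → iter f s n = some u → S.c u ≤ m)

/-- The selector views `f_i(x)` and `g_i(x)` coincide (as functions on the bag of `x`). -/
def ViewEq (f g : V → Option V) (i : ℕ) (x : 𝒱) : Prop :=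
  ∀ s ∈ S.B x, ∀ w : View V, S.SelView f i x s w ↔ S.SelView g i x s w

/-- `f` is a `V`-selector extending the `V₀`-selector `g` (i.e. `g` is the
restriction of `f` to `V0`). -/
def Ext (f g : V → Option V) : Prop :=
  S.Sel Set.univ f ∧ (∀ s ∈ S.V0, g s = f s) ∧ ∀ s ∉ S.V0, g s = none

/-- The selector view `f_i(x)` of a `V`-selector, as a relation on the bag of `x`. -/
def viewOn (f : V → Option V) (i : ℕ) (x : 𝒱) : V → View V → Prop :=
  fun s w => s ∈ S.B x ∧ S.SelView f i x s w

/-- `ω_i^g(x) = { f_i(x) | f is an extension of g }`. -/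
def omega (g : V → Option V) (i : ℕ) (x : 𝒱) : Set (V → View V → Prop) :=
  {R | ∃ f : V → Option V, S.Ext f g ∧ R = S.viewOn f i x}

/-- The accessibility set `α_i^g`: vertices of `Ψ_i` reachable from `σ` along the
trace of some extension of `g`. -/
def alpha (g : V → Option V) (i : ℕ) : Set V :=
  {s | s ∈ S.psi i ∧ ∃ f : V → Option V, S.Ext f g ∧ ∃ k : ℕ, iter f S.sigma k = some s}

/-- The set `B(g)_{x,y} ⊆ {⊥, ⊤}` (with `false` for `⊥` and `true` for `⊤`). -/
def Bsel (g : V → Option V) (x y : V) : Set Bool :=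
  {b | (b = false ∧ (¬ S.E x y ∨ (x ∈ S.V0 ∧ g x = none) ∨
          (∃ z : V, g x = some z ∧ z ≠ y) ∨ (S.E x y ∧ x ∉ S.V0))) ∨
       (b = true ∧ (g x = some y ∨ (S.E x y ∧ x ∉ S.V0)))}

end Setting

/-!
Non-criticality gives `Ψ_{≤ i-1} = Ψ_{≤ i}`, so the regions `Ψ_{>i-1}(x)` and `Ψ_{>i}(x)` can only
differ through the lowest-ancestor map `n`. If the step from `v_i` to `v_{i+1}` reaches a node
visited before, no region changes, except after an ascent from `v_i`: then the whole subtree of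
`v_i` has been visited and the region of `v_i` is empty. If it descends to a fresh child `v_{i+1}`, the
region of `v_i` splits into the regions of `v_i` and of `v_{i+1}` at index `i + 1`. No bag, hence
no edge, meets both parts, and an edge from the bag of `v_i` into the child's part starts in the
bag of `v_{i+1}`. So a trace from the bag of `v_i` stays in the part its first step enters, and
its view is the view at index `i + 1` of that part.
-/

open SimpleGraph

namespace Anc

variable {𝒱 : Type v} {T : SimpleGraph 𝒱} {root x y z : 𝒱}

theorem iff_mem_support (hT : T.IsAcyclic) {p : T.Walk root y} (hp : p.IsPath) :
    Anc T root x y ↔ x ∈ p.support := by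
  refine ⟨fun h => h p hp, fun hx q hq => ?_⟩
  obtain rfl : q = p := congrArg Subtype.val ((hT.subsingleton_path root y).elim ⟨q, hq⟩ ⟨p, hp⟩)
  exact hx

theorem refl (T : SimpleGraph 𝒱) (root x : 𝒱) : Anc T root x x :=
  fun p _ => p.end_mem_support

theorem trans (hT : T.IsTree) (hxy : Anc T root x y) (hyz : Anc T root y z) :
    Anc T root x z := by
  classical
  obtain ⟨p, hp, -⟩ := hT.existsUnique_path root z
  have hy : y ∈ p.support := hyz p hp
  exact (iff_mem_support hT.isAcyclic hp).2
    (p.support_takeUntil_subset_support hy (hxy _ (hp.takeUntil hy)))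

theorem antisymm (hT : T.IsTree) (hxy : Anc T root x y) (hyx : Anc T root y x) : x = y := by
  classical
  by_contra hne
  obtain ⟨p, hp, -⟩ := hT.existsUnique_path root y
  have hx : x ∈ p.support := hxy p hp
  have hy : y ∈ (p.takeUntil x hx).support := hyx _ (hp.takeUntil hx)
  have hpath : (p.takeUntil x hx).takeUntil y hy = p := congrArg Subtype.val
    ((hT.isAcyclic.subsingleton_path root y).elim ⟨_, (hp.takeUntil hx).takeUntil hy⟩ ⟨p, hp⟩)
  have hle := (p.takeUntil x hx).length_takeUntil_le_length hy
  have hlt := p.length_takeUntil_lt_length hx hne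
  rw [hpath] at hle
  omega

theorem or_of_adj (hT : T.IsTree) (hadj : T.Adj x y) : Anc T root x y ∨ Anc T root y x := by
  obtain ⟨p, hp, -⟩ := hT.existsUnique_path root x
  obtain ⟨q, hq, -⟩ := hT.existsUnique_path root y
  by_cases hx : x ∈ q.support
  · exact Or.inl ((iff_mem_support hT.isAcyclic hq).2 hx)
  · exact Or.inr ((iff_mem_support hT.isAcyclic hp).2
      (hT.isAcyclic.mem_support_of_ne_mem_support_of_adj_of_isPath hp hq hadj hx))

theorem iff_of_adj (hT : T.IsTree) (hadj : T.Adj x y) (hxy : Anc T root x y) :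
    Anc T root z y ↔ z = y ∨ Anc T root z x := by
  obtain ⟨p, hp, -⟩ := hT.existsUnique_path root x
  obtain ⟨q, hq, -⟩ := hT.existsUnique_path root y
  rw [iff_mem_support hT.isAcyclic hq, iff_mem_support hT.isAcyclic hp,
    hT.isAcyclic.path_concat hp hq hadj (hxy q hq), Walk.support_concat,
    List.mem_append, List.mem_singleton, or_comm]

theorem total (hT : T.IsTree) (hx : Anc T root x z) (hy : Anc T root y z) :
    Anc T root x y ∨ Anc T root y x := by
  classical
  obtain ⟨p, hp, -⟩ := hT.existsUnique_path root z
  obtain ⟨q, r, hq, -, rfl⟩ := hp.mem_support_iff_exists_append.mp (hx _ hp)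
  rcases (Walk.mem_support_append_iff q r).1 (hy _ hp) with hyq | hyr
  · exact Or.inr ((iff_mem_support hT.isAcyclic hq).2 hyq)
  · left
    have hsplit : q.append r = (q.append (r.takeUntil y hyr)).append (r.dropUntil y hyr) := by
      rw [← Walk.append_assoc, r.take_spec hyr]
    have hpath : (q.append (r.takeUntil y hyr)).IsPath := by
      rw [hsplit] at hp
      exact hp.of_append_left
    exact (iff_mem_support hT.isAcyclic hpath).2
      ((Walk.mem_support_append_iff _ _).2 (Or.inl q.end_mem_support))

theorem eq_of_adj (hT : T.IsTree) {x₁ x₂ : 𝒱} (h₁ : T.Adj x₁ y) (hx₁ : Anc T root x₁ y)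
    (h₂ : T.Adj x₂ y) (hx₂ : Anc T root x₂ y) : x₁ = x₂ := by
  have e₁ := ((iff_of_adj hT h₁ hx₁).1 hx₂).resolve_left h₂.ne
  have e₂ := ((iff_of_adj hT h₂ hx₂).1 hx₁).resolve_left h₁.ne
  exact antisymm hT e₂ e₁

theorem eq_of_adj_of_not_anc (hT : T.IsTree) (hxy : Anc T root x y) (hadj : T.Adj y z)
    (hxz : ¬ Anc T root x z) : y = x ∧ Anc T root z y := by
  have hzy : Anc T root z y :=
    (or_of_adj hT hadj).resolve_left fun hyz => hxz (trans hT hxy hyz)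
  exact ⟨(((iff_of_adj hT hadj.symm hzy).1 hxy).resolve_right hxz).symm, hzy⟩

theorem eq_root (hT : T.IsTree) (h : Anc T root x root) : x = root :=
  antisymm hT h fun p _ => p.start_mem_support

theorem ne_root_of_adj (hT : T.IsTree) (hadj : T.Adj x y) (hyx : Anc T root y x) : x ≠ root := by
  rintro rfl
  exact hadj.ne (eq_root hT hyx).symm

theorem mem_of_connected (hT : T.IsTree) {K : Set 𝒱} (hK : (T.induce K).Connected)
    (hxK : x ∈ K) (hzK : z ∈ K) (hxy : Anc T root x y) (hyz : Anc T root y z) : y ∈ K := by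
  classical
  obtain ⟨W⟩ := hK.preconnected ⟨x, hxK⟩ ⟨z, hzK⟩
  let q : T.Walk x z := (W.map (Embedding.induce K).toHom).bypass
  have hqK : ∀ a ∈ q.support, a ∈ K := fun a ha => by
    have ha' := (W.map (Embedding.induce K).toHom).support_bypass_subset_support ha
    rw [Walk.support_map, List.mem_map] at ha'
    obtain ⟨⟨b, hb⟩, -, rfl⟩ := ha'
    exact hb
  obtain ⟨p, hp, -⟩ := hT.existsUnique_path root z
  obtain ⟨p₁, p₂, hp₁, hp₂, rfl⟩ := hp.mem_support_iff_exists_append.mp (trans hT hxy hyz _ hp)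
  obtain rfl : q = p₂ := congrArg Subtype.val
    ((hT.isAcyclic.subsingleton_path x z).elim ⟨q, Walk.bypass_isPath _⟩ ⟨p₂, hp₂⟩)
  rcases (Walk.mem_support_append_iff _ _).1 (hyz _ hp) with hy | hy
  · obtain rfl := antisymm hT hxy ((iff_mem_support hT.isAcyclic hp₁).2 hy)
    exact hxK
  · exact hqK y hy

end Anc

section BagRoot

variable {V : Type u} {𝒱 : Type v} {T : SimpleGraph 𝒱} {root : 𝒱} {B : 𝒱 → Finset V} {s : V}

theorem IsBagRoot.unique (hT : T.IsTree) {r₁ r₂ : 𝒱} (h₁ : IsBagRoot T root B s r₁)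
    (h₂ : IsBagRoot T root B s r₂) : r₁ = r₂ :=
  Anc.antisymm hT (h₁.2 r₂ h₂.1) (h₂.2 r₁ h₁.1)

theorem exists_isBagRoot [Finite 𝒱] (hT : T.IsTree) (hconn : (T.induce {x | s ∈ B x}).Connected) :
    ∃ r, IsBagRoot T root B s r := by
  set K := {x | s ∈ B x}
  obtain ⟨⟨x₀, hx₀⟩⟩ := hconn.nonempty
  -- a member of `K` with fewest ancestors has no proper ancestor in `K`
  obtain ⟨r, hrK, hmin⟩ := Set.exists_min_image K (fun x => {y | Anc T root y x}.ncard)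
    (Set.toFinite K) ⟨x₀, hx₀⟩
  have htop : ∀ y ∈ K, Anc T root y r → y = r := fun y hy hyr => by
    by_contra hne
    have hlt : {z | Anc T root z y} ⊂ {z | Anc T root z r} :=
      ⟨fun z hz => Anc.trans hT hz hyr,
        fun h => hne (Anc.antisymm hT hyr (h (Anc.refl T root r)))⟩
    exact (hmin y hy).not_gt (Set.ncard_lt_ncard hlt)
  have hwalk : ∀ (a b : K) (W : (T.induce K).Walk a b), Anc T root r a → Anc T root r b := by
    intro a b W
    induction W with
    | nil => exact id
    | @cons a c b hac _ ih =>
      intro hra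
      refine ih ?_
      rcases Anc.or_of_adj hT hac with hac' | hca
      · exact Anc.trans hT hra hac'
      · rcases (Anc.iff_of_adj hT hac.symm hca).1 hra with hr | hrc
        · exact absurd (htop c c.2 (hr ▸ hca)) fun h => hac.ne (Subtype.ext (hr ▸ h).symm)
        · exact hrc
  exact ⟨r, hrK, fun x hx =>
    hwalk ⟨r, hrK⟩ ⟨x, hx⟩ (hconn.preconnected _ _).some (Anc.refl T root r)⟩

end BagRoot

namespace IsDFT

variable {𝒱 : Type v} {T : SimpleGraph 𝒱} {root : 𝒱} {ℓ : ℕ} {vs : ℕ → 𝒱} {i : ℕ}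

/-- Leaving the subtree of `vs i` a second time would traverse the edge from `vs i` to its parent
twice. -/
theorem le_of_anc_of_ascent (hdft : IsDFT T root ℓ vs) (hT : T.IsTree) (hi : 1 ≤ i)
    (hiℓ : i < ℓ) (hup : Anc T root (vs (i + 1)) (vs i)) {k : ℕ} (hk : 1 ≤ k) (hkℓ : k ≤ ℓ)
    (hik : Anc T root (vs i) (vs k)) : k ≤ i := by
  have hadj := hdft.adj i hi hiℓ
  have hne := Anc.ne_root_of_adj hT hadj hup
  induction h : ℓ - k generalizing k with
  | zero =>
    obtain rfl : k = ℓ := by omega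
    exact absurd (Anc.eq_root hT (hdft.last ▸ hik)) hne
  | succ d ih =>
    have hkℓ' : k < ℓ := by omega
    by_cases hnext : Anc T root (vs i) (vs (k + 1))
    · have := ih (by omega) (by omega) hnext (by omega)
      omega
    · have hadjk := hdft.adj k hk hkℓ'
      obtain ⟨hki, hpar⟩ := Anc.eq_of_adj_of_not_anc hT hik hadjk hnext
      rw [hki] at hadjk hpar
      have hpar' : vs (k + 1) = vs (i + 1) := Anc.eq_of_adj hT hadjk.symm hpar hadj.symm hup
      exact ((hdft.once _ _ hadj).unique ⟨hk, hkℓ', hki, hpar'⟩ ⟨hi, hiℓ, rfl, rfl⟩).le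

theorem mem_thetaLe_of_ascent (hdft : IsDFT T root ℓ vs) (hT : T.IsTree) (hi : 1 ≤ i)
    (hiℓ : i < ℓ) (hup : Anc T root (vs (i + 1)) (vs i)) {w : 𝒱} (hw : Anc T root (vs i) w) :
    w ∈ ThetaLe T root vs i := by
  have hne : w ≠ root := fun h =>
    Anc.ne_root_of_adj hT (hdft.adj i hi hiℓ) hup (Anc.eq_root hT (h ▸ hw))
  obtain ⟨u, hwu, -⟩ := Walk.exists_eq_cons_of_ne hne (hT.connected w root).some
  obtain ⟨k, ⟨hk, hkℓ, hkw, -⟩, -⟩ := hdft.once w u hwu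
  subst hkw
  exact ⟨k, hk, hdft.le_of_anc_of_ascent hT hi hiℓ hup hk hkℓ.le hw, Anc.refl T root _⟩

end IsDFT

section Regions

variable {V : Type u} {𝒱 : Type v} {T : SimpleGraph 𝒱} {root : 𝒱} {vs : ℕ → 𝒱}
  {B : 𝒱 → Finset V} {i : ℕ} {s : V} {r x y : 𝒱}

theorem mem_thetaLe_of_anc (hT : T.IsTree) (hy : y ∈ ThetaLe T root vs i)
    (hxy : Anc T root x y) : x ∈ ThetaLe T root vs i :=
  let ⟨j, hj, hji, hyj⟩ := hy
  ⟨j, hj, hji, Anc.trans hT hxy hyj⟩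

theorem thetaLe_succ (hT : T.IsTree) (hi : 1 ≤ i) (hadj : T.Adj (vs i) (vs (i + 1))) :
    ThetaLe T root vs (i + 1) = insert (vs (i + 1)) (ThetaLe T root vs i) := by
  ext x
  constructor
  · rintro ⟨j, hj, hji, hx⟩
    rcases Nat.lt_or_ge j (i + 1) with hlt | hge
    · exact Or.inr ⟨j, hj, by omega, hx⟩
    obtain rfl : j = i + 1 := by omega
    rcases Anc.or_of_adj hT hadj with hdown | hup
    · exact ((Anc.iff_of_adj hT hadj hdown).1 hx).imp id fun h => ⟨i, hi, le_rfl, h⟩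
    · exact Or.inr ⟨i, hi, le_rfl, Anc.trans hT hx hup⟩
  · rintro (rfl | ⟨j, hj, hji, hx⟩)
    · exact ⟨i + 1, by omega, le_rfl, Anc.refl T root _⟩
    · exact ⟨j, hj, by omega, hx⟩

theorem mem_psiLe_iff (hT : T.IsTree) (hr : IsBagRoot T root B s r) :
    s ∈ PsiLe T root vs B i ↔ r ∈ ThetaLe T root vs i := by
  constructor
  · rintro ⟨j, hj, hji, x, hx, hs⟩
    exact mem_thetaLe_of_anc hT ⟨j, hj, hji, hx⟩ (hr.2 x hs)
  · rintro ⟨j, hj, hji, hrj⟩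
    exact ⟨j, hj, hji, r, hrj, hr.1⟩

theorem LowestAnc.unique (hT : T.IsTree) {x₁ x₂ : 𝒱} (h₁ : LowestAnc T root vs i r x₁)
    (h₂ : LowestAnc T root vs i r x₂) : x₁ = x₂ :=
  Anc.antisymm hT (h₂.2.2 x₁ h₁.1 h₁.2.1) (h₁.2.2 x₂ h₂.1 h₂.2.1)

theorem mem_psiGtAt_iff (hT : T.IsTree) (hr : IsBagRoot T root B s r) :
    s ∈ PsiGtAt T root vs B i x ↔ s ∉ PsiLe T root vs B (i - 1) ∧ LowestAnc T root vs i r x :=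
  and_congr_right' ⟨fun ⟨_, hr', hx⟩ => IsBagRoot.unique hT hr' hr ▸ hx, fun hx => ⟨r, hr, hx⟩⟩

theorem disjoint_psiGtAt (hT : T.IsTree) (hxy : x ≠ y) :
    Disjoint (PsiGtAt T root vs B i x) (PsiGtAt T root vs B i y) :=
  Set.disjoint_left.2 fun _ ⟨_, _, hr, hx⟩ hy =>
    hxy (LowestAnc.unique hT hx ((mem_psiGtAt_iff hT hr).1 hy).2)

theorem psiGtAt_succ_eq
    (hθ : ThetaLe T root vs (i + 1) = ThetaLe T root vs i)
    (hψ : PsiLe T root vs B (i - 1) = PsiLe T root vs B i) (x : 𝒱) :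
    PsiGtAt T root vs B (i + 1) x = PsiGtAt T root vs B i x := by
  simp only [PsiGtAt, LowestAnc, hθ, hψ, Nat.add_sub_cancel]

theorem psiGtAt_eq_empty_of_ascent {ℓ : ℕ} (hdft : IsDFT T root ℓ vs) (hT : T.IsTree)
    (hi : 1 ≤ i) (hiℓ : i < ℓ) (hup : Anc T root (vs (i + 1)) (vs i))
    (hψ : PsiLe T root vs B (i - 1) = PsiLe T root vs B i) :
    PsiGtAt T root vs B i (vs i) = ∅ := by
  refine Set.eq_empty_of_forall_notMem fun s ⟨hs, r, hr, hri, _⟩ => hs ?_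
  rw [hψ, mem_psiLe_iff hT hr]
  exact hdft.mem_thetaLe_of_ascent hT hi hiℓ hup hri

end Regions

section FreshDescent

variable {V : Type u} {𝒱 : Type v} {T : SimpleGraph 𝒱} {root : 𝒱} {vs : ℕ → 𝒱}
  {B : 𝒱 → Finset V} {i : ℕ} {r x : 𝒱}

theorem anc_succ_of_notMem_thetaLe (hT : T.IsTree) (hi : 1 ≤ i)
    (hadj : T.Adj (vs i) (vs (i + 1))) (hfresh : vs (i + 1) ∉ ThetaLe T root vs i) :
    Anc T root (vs i) (vs (i + 1)) :=
  (Anc.or_of_adj hT hadj).resolve_right fun h => hfresh ⟨i, hi, le_rfl, h⟩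

theorem lowestAnc_succ_iff_of_not_anc (hT : T.IsTree) (hi : 1 ≤ i)
    (hadj : T.Adj (vs i) (vs (i + 1))) (hr : ¬ Anc T root (vs (i + 1)) r) :
    LowestAnc T root vs (i + 1) r x ↔ LowestAnc T root vs i r x := by
  unfold LowestAnc
  rw [thetaLe_succ hT hi hadj]
  have hne : ∀ {y}, Anc T root y r → y ≠ vs (i + 1) := by rintro y hy rfl; exact hr hy
  simp only [Set.mem_insert_iff]
  exact and_congr_right fun hx => and_congr (or_iff_right (hne hx))
    (forall_congr' fun y => imp_congr_right fun hy => imp_congr_left (or_iff_right (hne hy)))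

theorem lowestAnc_succ_iff_of_anc (hT : T.IsTree) (hi : 1 ≤ i)
    (hadj : T.Adj (vs i) (vs (i + 1))) (hfresh : vs (i + 1) ∉ ThetaLe T root vs i)
    (hr : Anc T root (vs (i + 1)) r) :
    LowestAnc T root vs (i + 1) r x ↔ x = vs (i + 1) := by
  have hlow : LowestAnc T root vs (i + 1) r (vs (i + 1)) := by
    refine ⟨hr, ⟨i + 1, by omega, le_rfl, Anc.refl T root _⟩, fun y hy hyθ => ?_⟩
    rw [thetaLe_succ hT hi hadj] at hyθ
    rcases hyθ with rfl | hyθ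
    · exact Anc.refl T root _
    · exact (Anc.total hT hy hr).resolve_right fun h => hfresh (mem_thetaLe_of_anc hT hyθ h)
  exact ⟨fun h => LowestAnc.unique hT h hlow, fun h => h ▸ hlow⟩

theorem lowestAnc_iff_of_anc (hT : T.IsTree) (hi : 1 ≤ i)
    (hadj : T.Adj (vs i) (vs (i + 1))) (hfresh : vs (i + 1) ∉ ThetaLe T root vs i)
    (hr : Anc T root (vs (i + 1)) r) :
    LowestAnc T root vs i r x ↔ x = vs i := by
  have hdown := anc_succ_of_notMem_thetaLe hT hi hadj hfresh
  have hlow : LowestAnc T root vs i r (vs i) := by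
    refine ⟨Anc.trans hT hdown hr, ⟨i, hi, le_rfl, Anc.refl T root _⟩, fun y hy hyθ => ?_⟩
    rcases Anc.total hT hy hr with h | h
    · exact ((Anc.iff_of_adj hT hadj hdown).1 h).resolve_left (by rintro rfl; exact hfresh hyθ)
    · exact absurd (mem_thetaLe_of_anc hT hyθ h) hfresh
  exact ⟨fun h => LowestAnc.unique hT h hlow, fun h => h ▸ hlow⟩

theorem notMem_psiGtAt_of_mem_bag_succ (hT : T.IsTree) (hi : 1 ≤ i)
    (hadj : T.Adj (vs i) (vs (i + 1))) (hfresh : vs (i + 1) ∉ ThetaLe T root vs i) {s : V}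
    (hs : s ∈ B (vs (i + 1))) : s ∉ PsiGtAt T root vs B (i + 1) (vs i) := by
  rintro ⟨hsψ, r, hr, hlow⟩
  rw [Nat.add_sub_cancel, mem_psiLe_iff hT hr] at hsψ
  have hdown := anc_succ_of_notMem_thetaLe hT hi hadj hfresh
  rcases (Anc.iff_of_adj hT hadj hdown).1 (hr.2 _ hs) with rfl | h
  · exact hadj.ne ((lowestAnc_succ_iff_of_anc hT hi hadj hfresh (Anc.refl T root _)).1 hlow)
  · exact hsψ (mem_thetaLe_of_anc hT ⟨i, hi, le_rfl, Anc.refl T root _⟩ h)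

variable [Finite 𝒱]

theorem psiGtAt_eq_union_of_fresh (hT : T.IsTree) (hi : 1 ≤ i)
    (hadj : T.Adj (vs i) (vs (i + 1))) (hfresh : vs (i + 1) ∉ ThetaLe T root vs i)
    (hconn : ∀ s : V, (T.induce {x | s ∈ B x}).Connected)
    (hψ : PsiLe T root vs B (i - 1) = PsiLe T root vs B i) :
    PsiGtAt T root vs B i (vs i) =
      PsiGtAt T root vs B (i + 1) (vs i) ∪ PsiGtAt T root vs B (i + 1) (vs (i + 1)) := by
  ext s
  obtain ⟨r, hr⟩ := exists_isBagRoot (root := root) hT (hconn s)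
  simp only [Set.mem_union, mem_psiGtAt_iff hT hr, Nat.add_sub_cancel, hψ, ← and_or_left]
  refine and_congr_right fun _ => ?_
  by_cases hv : Anc T root (vs (i + 1)) r
  · simp only [lowestAnc_iff_of_anc hT hi hadj hfresh hv,
      lowestAnc_succ_iff_of_anc hT hi hadj hfresh hv, or_true]
  · rw [lowestAnc_succ_iff_of_not_anc hT hi hadj hv, lowestAnc_succ_iff_of_not_anc hT hi hadj hv,
      iff_self_or]
    exact fun h => absurd h.2.1 hfresh

theorem psiGtAt_succ_eq_of_fresh (hT : T.IsTree) (hi : 1 ≤ i)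
    (hadj : T.Adj (vs i) (vs (i + 1))) (hfresh : vs (i + 1) ∉ ThetaLe T root vs i)
    (hconn : ∀ s : V, (T.induce {x | s ∈ B x}).Connected)
    (hψ : PsiLe T root vs B (i - 1) = PsiLe T root vs B i)
    (hx : x ∈ Theta T root vs i) (hxv : x ≠ vs i) :
    PsiGtAt T root vs B i x = PsiGtAt T root vs B (i + 1) x := by
  ext s
  obtain ⟨r, hr⟩ := exists_isBagRoot (root := root) hT (hconn s)
  simp only [mem_psiGtAt_iff hT hr, Nat.add_sub_cancel, hψ]
  refine and_congr_right fun _ => ?_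
  by_cases hv : Anc T root (vs (i + 1)) r
  · rw [lowestAnc_iff_of_anc hT hi hadj hfresh hv, lowestAnc_succ_iff_of_anc hT hi hadj hfresh hv]
    exact iff_of_false hxv (by rintro rfl; exact hfresh ⟨i, hi, le_rfl, hx⟩)
  · exact (lowestAnc_succ_iff_of_not_anc hT hi hadj hv).symm

theorem mem_psiGtAt_or_mem_of_fresh (hT : T.IsTree) (hi : 1 ≤ i)
    (hadj : T.Adj (vs i) (vs (i + 1))) (hfresh : vs (i + 1) ∉ ThetaLe T root vs i)
    {s t : V} (hconn : (T.induce {x | s ∈ B x}).Connected) (hs : s ∈ B x) (ht : t ∈ B x)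
    (htψ : t ∈ PsiGtAt T root vs B (i + 1) (vs (i + 1))) :
    s ∈ PsiGtAt T root vs B (i + 1) (vs (i + 1)) ∨ s ∈ B (vs (i + 1)) := by
  obtain ⟨-, rt, hrt, hlow⟩ := htψ
  have hvx : Anc T root (vs (i + 1)) x := Anc.trans hT hlow.1 (hrt.2 x ht)
  obtain ⟨r, hr⟩ := exists_isBagRoot (root := root) hT hconn
  rcases Anc.total hT (hr.2 x hs) hvx with h | h
  · exact Or.inr (Anc.mem_of_connected hT hconn hr.1 hs h hvx)
  · refine Or.inl ((mem_psiGtAt_iff hT hr).2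
      ⟨?_, (lowestAnc_succ_iff_of_anc hT hi hadj hfresh h).2 rfl⟩)
    rw [Nat.add_sub_cancel, mem_psiLe_iff hT hr]
    exact fun hrθ => hfresh (mem_thetaLe_of_anc hT hrθ h)

end FreshDescent

section Trace

variable {V : Type u} {f : V → Option V} {s u : V} {n : ℕ}

theorem iter_succ_eq_some : iter f s (n + 1) = some u ↔ ∃ w, iter f s n = some w ∧ f w = some u :=
  Option.bind_eq_some_iff

theorem exists_iter_eq_some_of_le {m : ℕ} (hmn : m ≤ n) (h : iter f s n = some u) :
    ∃ w, iter f s m = some w := by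
  induction n generalizing u with
  | zero => exact ⟨u, Nat.le_zero.1 hmn ▸ h⟩
  | succ n ih =>
    rcases hmn.eq_or_lt with rfl | hlt
    · exact ⟨u, h⟩
    · obtain ⟨w, hw, -⟩ := iter_succ_eq_some.1 h
      exact ih (by omega) hw

theorem iter_mem_of_forall_lt_mem_union {A A' : Set V}
    (hstep : ∀ u t, f u = some t → u ∈ A → t ∉ A') (hs : ∀ t, f s = some t → t ∉ A') {N : ℕ}
    (hN : ∀ n u, 1 ≤ n → n < N → iter f s n = some u → u ∈ A ∪ A') :
    ∀ n u, 1 ≤ n → n < N → iter f s n = some u → u ∈ A := by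
  intro n
  induction n with
  | zero => intro u h; omega
  | succ n ih =>
    intro u _ hnN hu
    refine (hN _ _ (by omega) hnN hu).resolve_right ?_
    obtain ⟨w, hw, hwu⟩ := iter_succ_eq_some.1 hu
    rcases Nat.eq_zero_or_pos n with rfl | hn
    · obtain rfl : s = w := Option.some_inj.1 hw
      exact hs u hwu
    · exact hstep w u hwu (ih w hn (by omega) hw)

end Trace

namespace Setting

variable {V : Type u} {𝒱 : Type v} (S : Setting V 𝒱)

/-- The selector view relative to an arbitrary region `R`; `SelView f i x` is the case
`R = Ψ_{>i-1}(x)`. -/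
def ViewIn (f : V → Option V) (R : Set V) (s : V) : View V → Prop := fun w =>
  match w with
  | View.unk =>
      (f s = none ∧ s ∉ R) ∨ (∃ t : V, f s = some t ∧ t ∉ R)
  | View.top =>
      (f s ≠ none ∨ s ∈ R) ∧
      (∀ (n : ℕ) (t : V), 1 ≤ n → iter f s n = some t → t ∈ R) ∧
      S.TraceWin f s
  | View.bot =>
      (f s ≠ none ∨ s ∈ R) ∧
      (∀ (n : ℕ) (t : V), 1 ≤ n → iter f s n = some t → t ∈ R) ∧
      ¬ S.TraceWin f s
  | View.exit t m =>
      ∃ j : ℕ, 2 ≤ j ∧ iter f s j = some t ∧ t ∉ R ∧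
        (∀ (n : ℕ) (u : V), 1 ≤ n → n < j → iter f s n = some u → u ∈ R) ∧
        (∃ (n : ℕ) (u : V), n < j ∧ iter f s n = some u ∧ S.c u = m) ∧
        (∀ (n : ℕ) (u : V), n < j → iter f s n = some u → S.c u ≤ m)

theorem selView_eq_viewIn (f : V → Option V) (i : ℕ) (x : 𝒱) (s : V) :
    S.SelView f i x s = S.ViewIn f (S.psiGtAt i x) s :=
  rfl

variable {S} {f g : V → Option V} {A A' R : Set V} {s : V}

theorem viewIn_empty_iff (w : View V) : S.ViewIn f ∅ s w ↔ w = View.unk := by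
  have hleave : ¬ ((f s ≠ none ∨ s ∈ (∅ : Set V)) ∧
      ∀ n t, 1 ≤ n → iter f s n = some t → t ∈ (∅ : Set V)) := by
    rintro ⟨hne | hs, hall⟩
    · obtain ⟨t, ht⟩ := Option.ne_none_iff_exists'.1 hne
      exact hall 1 t le_rfl ht
    · exact hs
  cases w with
  | unk =>
    refine iff_of_true ?_ rfl
    cases hfs : f s <;> simp [ViewIn, hfs]
  | top => exact iff_of_false (fun ⟨h₁, h₂, _⟩ => hleave ⟨h₁, h₂⟩) nofun
  | bot => exact iff_of_false (fun ⟨h₁, h₂, _⟩ => hleave ⟨h₁, h₂⟩) nofun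
  | exit t m =>
    refine iff_of_false (fun ⟨j, hj, hjt, _, hall, _⟩ => ?_) nofun
    obtain ⟨u, hu⟩ := exists_iter_eq_some_of_le (show 1 ≤ j by omega) hjt
    exact hall 1 u le_rfl (by omega) hu

theorem viewIn_unk_iff (hs : s ∉ R) : S.ViewIn f R s View.unk ↔ ∀ t, f s = some t → t ∉ R := by
  simp only [ViewIn, hs, not_false_eq_true, and_true]
  cases f s <;> simp

theorem viewIn_union_left (hstep : ∀ u t, f u = some t → u ∈ A → t ∉ A') (hs : s ∉ A ∪ A')
    (hsA' : ∀ t, f s = some t → t ∉ A') (w : View V) :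
    S.ViewIn f (A ∪ A') s w ↔ S.ViewIn f A s w := by
  have hsA : s ∉ A := fun h => hs (Or.inl h)
  have hstay : ∀ N, (∀ n u, 1 ≤ n → n < N → iter f s n = some u → u ∈ A ∪ A') ↔
      (∀ n u, 1 ≤ n → n < N → iter f s n = some u → u ∈ A) := fun N =>
    ⟨iter_mem_of_forall_lt_mem_union hstep hsA', fun h n u h1 h2 hu => Or.inl (h n u h1 h2 hu)⟩
  have hstay' : (∀ n u, 1 ≤ n → iter f s n = some u → u ∈ A ∪ A') ↔
      (∀ n u, 1 ≤ n → iter f s n = some u → u ∈ A) :=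
    ⟨fun h n u h1 hu => (hstay (n + 1)).1 (fun m v h1 _ hv => h m v h1 hv) n u h1 n.lt_succ_self hu,
      fun h n u h1 hu => Or.inl (h n u h1 hu)⟩
  cases w with
  | unk =>
    rw [viewIn_unk_iff hs, viewIn_unk_iff hsA]
    exact forall_congr' fun t => imp_congr_right fun ht => by simp [hsA' t ht]
  | top => simp only [ViewIn, hstay', hs, hsA, or_false]
  | bot => simp only [ViewIn, hstay', hs, hsA, or_false]
  | exit t m =>
    refine exists_congr fun j => and_congr_right fun hj => and_congr_right fun ht =>
      ⟨fun ⟨htR, hst, hc⟩ => ⟨fun h => htR (Or.inl h), (hstay j).1 hst, hc⟩,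
        fun ⟨htA, hst, hc⟩ => ⟨?_, (hstay j).2 hst, hc⟩⟩
    obtain ⟨w, hw, hwt⟩ := iter_succ_eq_some.1 (show iter f s (j - 1 + 1) = some t by
      rwa [Nat.sub_add_cancel (by omega)])
    exact fun htR => htR.elim htA (hstep w t hwt (hst _ _ (by omega) (by omega) hw))

theorem viewIn_union_right (hstep : ∀ u t, f u = some t → u ∈ A' → t ∉ A) (hs : s ∉ A ∪ A')
    (hsA : ∀ t, f s = some t → t ∉ A) (w : View V) :
    S.ViewIn f (A ∪ A') s w ↔ S.ViewIn f A' s w := by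
  rw [Set.union_comm] at hs ⊢
  exact viewIn_union_left hstep hs hsA w

/-- With no edge between `A` and `A'`, the view on `A ∪ A'` is the view on whichever of the two
regions the first step enters. -/
theorem viewIn_union_congr {P : Prop} (hf : S.Sel Set.univ f) (hg : S.Sel Set.univ g)
    (hdisj : Disjoint A A') (hsep : ∀ u t, S.E u t → (u ∈ A → t ∉ A') ∧ (u ∈ A' → t ∉ A))
    (hs : s ∉ A ∪ A') (hentry : ∀ t, S.E s t → t ∈ A' → P)
    (hA : ∀ w, S.ViewIn f A s w ↔ S.ViewIn g A s w)
    (hA' : P → ∀ w, S.ViewIn f A' s w ↔ S.ViewIn g A' s w) (w : View V) :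
    S.ViewIn f (A ∪ A') s w ↔ S.ViewIn g (A ∪ A') s w := by
  have hsA' : s ∉ A' := fun h => hs (Or.inr h)
  have hfirst : (∀ t, f s = some t → t ∉ A') ↔ (∀ t, g s = some t → t ∉ A') := by
    by_cases hP : P
    · rw [← viewIn_unk_iff hsA', ← viewIn_unk_iff hsA']
      exact hA' hP _
    · exact iff_of_true (fun t ht htA' => hP (hentry t (hf s t ht).2 htA'))
        (fun t ht htA' => hP (hentry t (hg s t ht).2 htA'))
  have hnotA : ∀ {h : V → Option V} {t}, h s = some t → t ∈ A' → ∀ t', h s = some t' → t' ∉ A :=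
    fun ht htA' _ ht' => Option.some_inj.1 (ht.symm.trans ht') ▸ hdisj.notMem_of_mem_right htA'
  by_cases hF : ∀ t, f s = some t → t ∉ A'
  · rw [viewIn_union_left (fun u t h => (hsep u t (hf u t h).2).1) hs hF,
      viewIn_union_left (fun u t h => (hsep u t (hg u t h).2).1) hs (hfirst.1 hF)]
    exact hA w
  · obtain ⟨t, hft, htA'⟩ : ∃ t, f s = some t ∧ t ∈ A' := by simpa using hF
    obtain ⟨t', hgt', ht'A'⟩ : ∃ t, g s = some t ∧ t ∈ A' := by
      simpa using hfirst.not.1 hF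
    rw [viewIn_union_right (fun u t h => (hsep u t (hf u t h).2).2) hs (hnotA hft htA'),
      viewIn_union_right (fun u t h => (hsep u t (hg u t h).2).2) hs (hnotA hgt' ht'A')]
    exact hA' (hentry t (hf s t hft).2 htA') w

variable {i : ℕ} {x : 𝒱}

theorem psiLe_pred_eq_of_not_crit (hnc : ¬ S.Crit i) : S.psiLe (i - 1) = S.psiLe i := by
  have hmono : S.psiLe (i - 1) ⊆ S.psiLe i := fun _ ⟨j, hj, hji, hs⟩ => ⟨j, hj, by omega, hs⟩
  by_contra hne
  exact hnc (compl_lt_compl_iff_lt.2 (hmono.ssubset_of_ne hne))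

theorem viewEq_of_psiGtAt_eq {j : ℕ} (hψ : S.psiGtAt i x = S.psiGtAt j x)
    (h : S.ViewEq f g j x) : S.ViewEq f g i x := fun s hs w => by
  simpa only [selView_eq_viewIn, hψ] using h s hs w

theorem viewEq_of_psiGtAt_eq_empty (hψ : S.psiGtAt i x = ∅) : S.ViewEq f g i x := fun s _ w => by
  rw [selView_eq_viewIn, selView_eq_viewIn, hψ, viewIn_empty_iff, viewIn_empty_iff]

theorem viewEq_of_succ_mem_thetaLe (hT : S.T.IsTree) (hdft : IsDFT S.T S.root S.len S.vs)
    (hi : 1 ≤ i) (hiℓ : i < S.len) (hψ : S.psiLe (i - 1) = S.psiLe i)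
    (hv : S.vs (i + 1) ∈ ThetaLe S.T S.root S.vs i)
    (h : ∀ x ∈ S.theta (i + 1), S.ViewEq f g (i + 1) x) :
    ∀ x ∈ S.theta i, S.ViewEq f g i x := by
  have hadj := hdft.adj i hi hiℓ
  have hθ : ThetaLe S.T S.root S.vs (i + 1) = ThetaLe S.T S.root S.vs i := by
    rw [thetaLe_succ hT hi hadj, Set.insert_eq_of_mem hv]
  intro x hx
  by_cases hx' : x ∈ S.theta (i + 1)
  · exact viewEq_of_psiGtAt_eq (psiGtAt_succ_eq hθ hψ x).symm (h x hx')
  · have hup : Anc S.T S.root (S.vs (i + 1)) (S.vs i) :=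
      (Anc.or_of_adj hT hadj).resolve_left fun hdown => hx' (Anc.trans hT hx hdown)
    obtain rfl : x = S.vs i := ((Anc.iff_of_adj hT hadj.symm hup).1 hx).resolve_right hx'
    exact viewEq_of_psiGtAt_eq_empty (psiGtAt_eq_empty_of_ascent hdft hT hi hiℓ hup hψ)

theorem viewEq_vs_of_succ_notMem_thetaLe [Finite 𝒱] (hT : S.T.IsTree)
    (hedge : ∀ s t, S.E s t → ∃ x, s ∈ S.B x ∧ t ∈ S.B x)
    (hconn : ∀ s, (S.T.induce {x | s ∈ S.B x}).Connected) (hi : 1 ≤ i)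
    (hadj : S.T.Adj (S.vs i) (S.vs (i + 1))) (hψ : S.psiLe (i - 1) = S.psiLe i)
    (hfresh : S.vs (i + 1) ∉ ThetaLe S.T S.root S.vs i)
    (hf : S.Sel Set.univ f) (hg : S.Sel Set.univ g)
    (h : ∀ x ∈ S.theta (i + 1), S.ViewEq f g (i + 1) x) :
    S.ViewEq f g i (S.vs i) := by
  have hsep : ∀ {s t x}, s ∈ S.B x → t ∈ S.B x → t ∈ S.psiGtAt (i + 1) (S.vs (i + 1)) →
      s ∉ S.psiGtAt (i + 1) (S.vs i) := fun hs ht htψ hsψ =>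
    (mem_psiGtAt_or_mem_of_fresh hT hi hadj hfresh (hconn _) hs ht htψ).elim
      ((disjoint_psiGtAt hT hadj.ne).notMem_of_mem_right · hsψ)
      (notMem_psiGtAt_of_mem_bag_succ hT hi hadj hfresh · hsψ)
  have hR : S.psiGtAt i (S.vs i) =
      S.psiGtAt (i + 1) (S.vs i) ∪ S.psiGtAt (i + 1) (S.vs (i + 1)) :=
    psiGtAt_eq_union_of_fresh hT hi hadj hfresh hconn hψ
  intro s hs w
  have hsψ : s ∉ S.psiGtAt i (S.vs i) := fun h' =>
    h'.1 (show s ∈ S.psiLe (i - 1) from hψ ▸ ⟨i, hi, le_rfl, S.vs i, Anc.refl S.T S.root _, hs⟩)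
  rw [hR] at hsψ
  rw [selView_eq_viewIn, selView_eq_viewIn, hR]
  refine viewIn_union_congr (P := s ∈ S.B (S.vs (i + 1))) hf hg (disjoint_psiGtAt hT hadj.ne)
    (fun u t hut => ?_) hsψ (fun t hst htψ => ?_)
    (h _ (anc_succ_of_notMem_thetaLe hT hi hadj hfresh) s hs)
    (fun hs' => h _ (Anc.refl S.T S.root _) s hs') w
  · obtain ⟨y, hu, ht⟩ := hedge u t hut
    exact ⟨fun huψ htψ => hsep hu ht htψ huψ, fun huψ htψ => hsep ht hu huψ htψ⟩
  · obtain ⟨y, hsy, hty⟩ := hedge s t hst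
    exact (mem_psiGtAt_or_mem_of_fresh hT hi hadj hfresh (hconn s) hsy hty htψ).resolve_left
      fun h' => hsψ (Or.inr h')

theorem viewEq_of_succ_notMem_thetaLe [Finite 𝒱] (hT : S.T.IsTree)
    (hedge : ∀ s t, S.E s t → ∃ x, s ∈ S.B x ∧ t ∈ S.B x)
    (hconn : ∀ s, (S.T.induce {x | s ∈ S.B x}).Connected) (hi : 1 ≤ i)
    (hadj : S.T.Adj (S.vs i) (S.vs (i + 1))) (hψ : S.psiLe (i - 1) = S.psiLe i)
    (hfresh : S.vs (i + 1) ∉ ThetaLe S.T S.root S.vs i)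
    (hf : S.Sel Set.univ f) (hg : S.Sel Set.univ g)
    (h : ∀ x ∈ S.theta (i + 1), S.ViewEq f g (i + 1) x) :
    ∀ x ∈ S.theta i, S.ViewEq f g i x := by
  intro x hx
  rcases eq_or_ne x (S.vs i) with rfl | hxv
  · exact viewEq_vs_of_succ_notMem_thetaLe hT hedge hconn hi hadj hψ hfresh hf hg h
  · exact viewEq_of_psiGtAt_eq (psiGtAt_succ_eq_of_fresh hT hi hadj hfresh hconn hψ hx hxv)
      (h x (Anc.trans hT hx (anc_succ_of_notMem_thetaLe hT hi hadj hfresh)))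

end Setting

theorem selView_noncritical_determination_general {V : Type u} {𝒱 : Type v}
    [DecidableEq V] [Fintype 𝒱]
    (S : Setting V 𝒱) (hS : S.Standing)
    (i : ℕ) (hi1 : 1 ≤ i) (hi2 : i ≤ S.len - 1) (hnc : ¬ S.Crit i)
    (f g : V → Option V) (hf : S.Sel Set.univ f) (hg : S.Sel Set.univ g)
    (h : ∀ x ∈ S.theta (i + 1), S.ViewEq f g (i + 1) x) :
    ∀ x ∈ S.theta i, S.ViewEq f g i x := by
  obtain ⟨-, ⟨⟨hT, hedge, hconn⟩, -⟩, hdft, -⟩ := hS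
  have hiℓ : i < S.len := by have := hdft.one_le; omega
  have hψ := Setting.psiLe_pred_eq_of_not_crit hnc
  by_cases hv : S.vs (i + 1) ∈ ThetaLe S.T S.root S.vs i
  · exact Setting.viewEq_of_succ_mem_thetaLe hT hdft hi1 hiℓ hψ hv h
  · exact Setting.viewEq_of_succ_notMem_thetaLe hT hedge hconn hi1 (hdft.adj i hi1 hiℓ) hψ hv
      hf hg h

/-- For a non-critical index `i ≤ ℓ - 1`, the selector views at
index `i` are determined by the selector views at index `i + 1`. -/
theorem selView_noncritical_determination {V : Type u} {𝒱 : Type v}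
    [Fintype V] [DecidableEq V] [Fintype 𝒱]
    (S : Setting V 𝒱) (hS : S.Standing) (hV : 2 ≤ Fintype.card V)
    (i : ℕ) (hi1 : 1 ≤ i) (hi2 : i ≤ S.len - 1) (hnc : ¬ S.Crit i)
    (f g : V → Option V) (hf : S.Sel Set.univ f) (hg : S.Sel Set.univ g)
    (h : ∀ x ∈ S.theta (i + 1), S.ViewEq f g (i + 1) x) :
    ∀ x ∈ S.theta i, S.ViewEq f g i x :=
  selView_noncritical_determination_general S hS i hi1 hi2 hnc f g hf hg h
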